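/- arXiv:2306.02983 — 3 statements merged into one kernel-verified Lean document; each statement's English description precedes it below -/
import Mathlib

section
/- The operator par = cr_L is the most permissive scheduling operator: for every f ∈ {strict} ∪ {cr_ℓ | ℓ ⊆ L}, all interactions i1, i2 ∈ I and every action a ∈ A, if there exists i' with f(i1,i2) →a i', then there exists i'' with par(i1,i2) →a i''. -/
/-- An atomic communication action: the emission (`isEmission = true`) or
reception (`isEmission = false`) of a message on a lifeline. -/
structure MyAction (L M : Type) where
  lifeline : L
  isEmission : Bool
  message : M

/-- Interaction terms: constants are actions and the empty interaction,
`loopS` is unary, and `strict`, `alt` and `cr ℓ` (for every `ℓ ⊆ L`) are binary.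
`seq = cr ∅` and `par = cr Set.univ`. -/
inductive Interaction (L M : Type) : Type where
  | empty : Interaction L M
  | act : MyAction L M → Interaction L M
  | loopS : Interaction L M → Interaction L M
  | strict : Interaction L M → Interaction L M → Interaction L M
  | alt : Interaction L M → Interaction L M → Interaction L M
  | cr : Set L → Interaction L M → Interaction L M → Interaction L M

namespace Interaction

variable {L M : Type}

/-- The evasion predicate `i ↓ ℓ`. -/
inductive Evades : Interaction L M → Set L → Prop where
  | empty (ℓ : Set L) : Evades .empty ℓ
  | act (a : MyAction L M) (ℓ : Set L) : a.lifeline ∉ ℓ → Evades (.act a) ℓ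
  | altL {i1 i2 : Interaction L M} {ℓ} : Evades i1 ℓ → Evades (.alt i1 i2) ℓ
  | altR {i1 i2 : Interaction L M} {ℓ} : Evades i2 ℓ → Evades (.alt i1 i2) ℓ
  | strict {i1 i2 : Interaction L M} {ℓ} : Evades i1 ℓ → Evades i2 ℓ →
      Evades (.strict i1 i2) ℓ
  | cr {i1 i2 : Interaction L M} {ℓ' ℓ} : Evades i1 ℓ → Evades i2 ℓ →
      Evades (.cr ℓ' i1 i2) ℓ
  | loopS (i1 : Interaction L M) (ℓ : Set L) : Evades (.loopS i1) ℓ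

/-- The pruning relation `i ⤳ℓ i'`. -/
inductive Prune : Interaction L M → Set L → Interaction L M → Prop where
  | empty (ℓ : Set L) : Prune .empty ℓ .empty
  | act (a : MyAction L M) (ℓ : Set L) : a.lifeline ∉ ℓ → Prune (.act a) ℓ (.act a)
  | altL {i1 i2 i1' : Interaction L M} {ℓ} : Prune i1 ℓ i1' → ¬ Evades i2 ℓ →
      Prune (.alt i1 i2) ℓ i1'
  | altR {i1 i2 i2' : Interaction L M} {ℓ} : Prune i2 ℓ i2' → ¬ Evades i1 ℓ →
      Prune (.alt i1 i2) ℓ i2'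
  | altBoth {i1 i2 i1' i2' : Interaction L M} {ℓ} : Prune i1 ℓ i1' → Prune i2 ℓ i2' →
      Prune (.alt i1 i2) ℓ (.alt i1' i2')
  | strict {i1 i2 i1' i2' : Interaction L M} {ℓ} : Prune i1 ℓ i1' → Prune i2 ℓ i2' →
      Prune (.strict i1 i2) ℓ (.strict i1' i2')
  | cr {i1 i2 i1' i2' : Interaction L M} {ℓ' ℓ} : Prune i1 ℓ i1' → Prune i2 ℓ i2' →
      Prune (.cr ℓ' i1 i2) ℓ (.cr ℓ' i1' i2')
  | loopS {i1 i1' : Interaction L M} {ℓ} : Prune i1 ℓ i1' →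
      Prune (.loopS i1) ℓ (.loopS i1')
  | loopSElim {i1 : Interaction L M} {ℓ} : ¬ Evades i1 ℓ → Prune (.loopS i1) ℓ .empty

/-- The non-expression predicate `i ̸→a`. -/
inductive NoExpr : Interaction L M → MyAction L M → Prop where
  | empty (a : MyAction L M) : NoExpr .empty a
  | act {a' a : MyAction L M} : a' ≠ a → NoExpr (.act a') a
  | loopS {i1 : Interaction L M} {a} : NoExpr i1 a → NoExpr (.loopS i1) a
  | strictNoEvade {i1 i2 : Interaction L M} {a} : NoExpr i1 a →
      ¬ Evades i1 Set.univ → NoExpr (.strict i1 i2) a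
  | strictBoth {i1 i2 : Interaction L M} {a} : NoExpr i1 a →
      NoExpr i2 a → NoExpr (.strict i1 i2) a
  | crNoEvade {i1 i2 : Interaction L M} {ℓ a} : NoExpr i1 a →
      ¬ Evades i1 ({a.lifeline} \ ℓ) → NoExpr (.cr ℓ i1 i2) a
  | crBoth {i1 i2 : Interaction L M} {ℓ a} : NoExpr i1 a →
      NoExpr i2 a → NoExpr (.cr ℓ i1 i2) a
  | alt {i1 i2 : Interaction L M} {a} : NoExpr i1 a → NoExpr i2 a →
      NoExpr (.alt i1 i2) a

/-- The execution relation `i →a i'`. -/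
inductive Exec : Interaction L M → MyAction L M → Interaction L M → Prop where
  | act (a : MyAction L M) : Exec (.act a) a .empty
  | loop {i1 i1' : Interaction L M} {a} : Exec i1 a i1' →
      Exec (.loopS i1) a (.strict i1' (.loopS i1))
  | strictL {i1 i2 i1' : Interaction L M} {a} : Exec i1 a i1' →
      Exec (.strict i1 i2) a (.strict i1' i2)
  | crL {i1 i2 i1' : Interaction L M} {ℓ a} : Exec i1 a i1' →
      Exec (.cr ℓ i1 i2) a (.cr ℓ i1' i2)
  | strictR {i1 i2 i2' : Interaction L M} {a} : Exec i2 a i2' → Evades i1 Set.univ →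
      Exec (.strict i1 i2) a i2'
  | crR {i1 i2 i1' i2' : Interaction L M} {ℓ a} : Exec i2 a i2' →
      Prune i1 ({a.lifeline} \ ℓ) i1' → Exec (.cr ℓ i1 i2) a (.cr ℓ i1' i2')
  | altChoiceL {i1 i2 i1' : Interaction L M} {a} : Exec i1 a i1' → NoExpr i2 a →
      Exec (.alt i1 i2) a i1'
  | altChoiceR {i1 i2 i2' : Interaction L M} {a} : Exec i2 a i2' → NoExpr i1 a →
      Exec (.alt i1 i2) a i2'
  | altDelay {i1 i2 i1' i2' : Interaction L M} {a} : Exec i1 a i1' → Exec i2 a i2' →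
      Exec (.alt i1 i2) a (.alt i1' i2')

/-- The trace semantics `σ(i)`, as a predicate: `Sem i t` iff `t ∈ σ(i)`. -/
inductive Sem : Interaction L M → List (MyAction L M) → Prop where
  | nil {i : Interaction L M} : Evades i Set.univ → Sem i []
  | cons {i i' : Interaction L M} {a t} : Exec i a i' → Sem i' t → Sem i (a :: t)

/-- One execution step: `i → i'` iff `i →a i'` for some action `a`. -/
def Step (i i' : Interaction L M) : Prop := ∃ a, Exec i a i'

/-- `reach i = { i' | i →* i' }`. -/
def Reach (i : Interaction L M) : Set (Interaction L M) :=
  {i' | Relation.ReflTransGen Step i i'}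

/-- One-step rewriting by the simplification system `R`, closed under contexts. -/
inductive Rw : Interaction L M → Interaction L M → Prop where
  | strictEmptyL (x : Interaction L M) : Rw (.strict .empty x) x
  | strictEmptyR (x : Interaction L M) : Rw (.strict x .empty) x
  | crEmptyL (ℓ : Set L) (x : Interaction L M) : Rw (.cr ℓ .empty x) x
  | crEmptyR (ℓ : Set L) (x : Interaction L M) : Rw (.cr ℓ x .empty) x
  | altEmptyLoop (x : Interaction L M) : Rw (.alt .empty (.loopS x)) (.loopS x)
  | altLoopEmpty (x : Interaction L M) : Rw (.alt (.loopS x) .empty) (.loopS x)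
  | altEmptyEmpty : Rw (Interaction.alt (L := L) (M := M) .empty .empty) .empty
  | loopEmpty : Rw (Interaction.loopS (L := L) (M := M) .empty) .empty
  | loopCongr {i i' : Interaction L M} : Rw i i' → Rw (.loopS i) (.loopS i')
  | strictCongrL {i1 i1' i2 : Interaction L M} : Rw i1 i1' →
      Rw (.strict i1 i2) (.strict i1' i2)
  | strictCongrR {i1 i2 i2' : Interaction L M} : Rw i2 i2' →
      Rw (.strict i1 i2) (.strict i1 i2')
  | altCongrL {i1 i1' i2 : Interaction L M} : Rw i1 i1' → Rw (.alt i1 i2) (.alt i1' i2)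
  | altCongrR {i1 i2 i2' : Interaction L M} : Rw i2 i2' → Rw (.alt i1 i2) (.alt i1 i2')
  | crCongrL {i1 i1' i2 : Interaction L M} {ℓ} : Rw i1 i1' →
      Rw (.cr ℓ i1 i2) (.cr ℓ i1' i2)
  | crCongrR {i1 i2 i2' : Interaction L M} {ℓ} : Rw i2 i2' →
      Rw (.cr ℓ i1 i2) (.cr ℓ i1 i2')

end Interaction

open Interaction

lemma prune_empty_self {L M : Type} (i : Interaction L M) :
    Prune i (∅ : Set L) i := by
  induction i with
  | empty => exact .empty ∅
  | act a => exact .act a ∅ (by simp)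
  | loopS i ih => exact .loopS ih
  | strict i1 i2 ih1 ih2 => exact .strict ih1 ih2
  | alt i1 i2 ih1 ih2 => exact .altBoth ih1 ih2
  | cr ℓ i1 i2 ih1 ih2 => exact .cr ih1 ih2

/-- `par = cr_L` is the most permissive scheduling operator: for every
`f ∈ {strict} ∪ {cr_ℓ | ℓ ⊆ L}`, if `f(i1,i2)` can execute action `a`, then so can
`par(i1,i2)`. -/
theorem par_most_permissive {L M : Type} [Finite L] [Finite M]
    (f : Interaction L M → Interaction L M → Interaction L M)
    (hf : f = Interaction.strict ∨ ∃ ℓ : Set L, f = Interaction.cr ℓ)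
    (i1 i2 : Interaction L M) (a : MyAction L M)
    (h : ∃ i', Exec (f i1 i2) a i') :
    ∃ i'', Exec (Interaction.cr Set.univ i1 i2) a i'' := by
  obtain ⟨i', hex⟩ := h
  have hpr : Prune i1 ({a.lifeline} \ Set.univ) i1 := by
    simpa [Set.diff_univ] using prune_empty_self (M := M) i1
  rcases hf with rfl | ⟨ℓ, rfl⟩
  · cases hex with
    | strictL h1 => exact ⟨_, .crL h1⟩
    | strictR h2 _ => exact ⟨_, .crR h2 hpr⟩
  · cases hex with
    | crL h1 => exact ⟨_, .crL h1⟩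
    | crR h2 _ => exact ⟨_, .crR h2 hpr⟩
end

section
/- The operational semantics of non-deterministic choice (with both the alt-choice and the delayed-choice rule) is trace-equivalent to branch union: for all interactions i1, i2 ∈ I, σ(alt(i1,i2)) = σ(i1) ∪ σ(i2). -/
open Interaction

section Aux
open Classical
variable {L M : Type}

lemma evades_prune {i : Interaction L M} {ℓ : Set L} (h : Evades i ℓ) :
    ∃ i', Prune i ℓ i' := by
  induction i with
  | empty => exact ⟨_, .empty ℓ⟩
  | act a =>
    cases h with
    | act _ _ h => exact ⟨_, .act a ℓ h⟩
  | loopS i1 ih =>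
    by_cases h1 : Evades i1 ℓ
    · obtain ⟨i1', h1'⟩ := ih h1
      exact ⟨_, .loopS h1'⟩
    · exact ⟨_, .loopSElim h1⟩
  | strict i1 i2 ih1 ih2 =>
    cases h with
    | strict h1 h2 =>
      obtain ⟨i1', h1'⟩ := ih1 h1
      obtain ⟨i2', h2'⟩ := ih2 h2
      exact ⟨_, .strict h1' h2'⟩
  | alt i1 i2 ih1 ih2 =>
    by_cases h1 : Evades i1 ℓ <;> by_cases h2 : Evades i2 ℓ
    · obtain ⟨i1', h1'⟩ := ih1 h1
      obtain ⟨i2', h2'⟩ := ih2 h2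
      exact ⟨_, .altBoth h1' h2'⟩
    · obtain ⟨i1', h1'⟩ := ih1 h1
      exact ⟨_, .altL h1' h2⟩
    · obtain ⟨i2', h2'⟩ := ih2 h2
      exact ⟨_, .altR h2' h1⟩
    · cases h with
      | altL h => exact absurd h h1
      | altR h => exact absurd h h2
  | cr ℓ' i1 i2 ih1 ih2 =>
    cases h with
    | cr h1 h2 =>
      obtain ⟨i1', h1'⟩ := ih1 h1
      obtain ⟨i2', h2'⟩ := ih2 h2
      exact ⟨_, .cr h1' h2'⟩

lemma exec_or_noExpr (i : Interaction L M) (a : MyAction L M) :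
    (∃ i', Exec i a i') ∨ NoExpr i a := by
  induction i with
  | empty => exact Or.inr (.empty a)
  | act a' =>
    by_cases h : a' = a
    · subst h; exact Or.inl ⟨_, .act a'⟩
    · exact Or.inr (.act h)
  | loopS i1 ih =>
    rcases ih with ⟨i1', h⟩ | h
    · exact Or.inl ⟨_, .loop h⟩
    · exact Or.inr (.loopS h)
  | strict i1 i2 ih1 ih2 =>
    rcases ih1 with ⟨i1', h1⟩ | h1
    · exact Or.inl ⟨_, .strictL h1⟩
    · by_cases he : Evades i1 Set.univ
      · rcases ih2 with ⟨i2', h2⟩ | h2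
        · exact Or.inl ⟨_, .strictR h2 he⟩
        · exact Or.inr (.strictBoth h1 h2)
      · exact Or.inr (.strictNoEvade h1 he)
  | alt i1 i2 ih1 ih2 =>
    rcases ih1 with ⟨i1', h1⟩ | h1 <;> rcases ih2 with ⟨i2', h2⟩ | h2
    · exact Or.inl ⟨_, .altDelay h1 h2⟩
    · exact Or.inl ⟨_, .altChoiceL h1 h2⟩
    · exact Or.inl ⟨_, .altChoiceR h2 h1⟩
    · exact Or.inr (.alt h1 h2)
  | cr ℓ i1 i2 ih1 ih2 =>
    rcases ih1 with ⟨i1', h1⟩ | h1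
    · exact Or.inl ⟨_, .crL h1⟩
    · by_cases he : Evades i1 ({a.lifeline} \ ℓ)
      · rcases ih2 with ⟨i2', h2⟩ | h2
        · obtain ⟨i1', hp⟩ := evades_prune he
          exact Or.inl ⟨_, .crR h2 hp⟩
        · exact Or.inr (.crBoth h1 h2)
      · exact Or.inr (.crNoEvade h1 he)

lemma sem_altL {i1 i2 : Interaction L M} {t} (h : Sem i1 t) :
    Sem (Interaction.alt i1 i2) t := by
  induction h generalizing i2 with
  | nil he => exact .nil (.altL he)
  | cons hx _ ih =>
    rcases exec_or_noExpr i2 _ with ⟨i2', h2⟩ | h2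
    · exact .cons (.altDelay hx h2) ih
    · exact .cons (.altChoiceL hx h2) (by assumption)

lemma sem_altR {i1 i2 : Interaction L M} {t} (h : Sem i2 t) :
    Sem (Interaction.alt i1 i2) t := by
  induction h generalizing i1 with
  | nil he => exact .nil (.altR he)
  | cons hx _ ih =>
    rcases exec_or_noExpr i1 _ with ⟨i1', h1⟩ | h1
    · exact .cons (.altDelay h1 hx) ih
    · exact .cons (.altChoiceR hx h1) (by assumption)

lemma sem_alt_inv {i t} (h : Sem i t) :
    ∀ j1 j2 : Interaction L M, i = .alt j1 j2 → Sem j1 t ∨ Sem j2 t := by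
  induction h with
  | nil he =>
    rintro j1 j2 rfl
    cases he with
    | altL h => exact Or.inl (.nil h)
    | altR h => exact Or.inr (.nil h)
  | cons hx hs ih =>
    rintro j1 j2 rfl
    cases hx with
    | altChoiceL h _ => exact Or.inl (.cons h hs)
    | altChoiceR h _ => exact Or.inr (.cons h hs)
    | altDelay h1 h2 =>
      rcases ih _ _ rfl with h | h
      · exact Or.inl (.cons h1 h)
      · exact Or.inr (.cons h2 h)

end Aux

/-- the operational semantics of non-deterministic choice is
trace-equivalent to branch union: `σ(alt(i1,i2)) = σ(i1) ∪ σ(i2)`. -/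

theorem sem_alt {L M : Type} [Finite L] [Finite M] (i1 i2 : Interaction L M) :
    {t | Sem (Interaction.alt i1 i2) t} = {t | Sem i1 t} ∪ {t | Sem i2 t} := by
  ext t
  constructor
  · rintro h
    rcases sem_alt_inv h i1 i2 rfl with h | h
    · exact Or.inl h
    · exact Or.inr h
  · rintro (h | h)
    · exact sem_altL h
    · exact sem_altR h
end

section
/- The trace language of every interaction is regular: for every interaction i ∈ I, there exists a nondeterministic finite automaton over the alphabet A, with a finite set of states, whose recognized language is exactly σ(i). -/
open Interaction

/-! The semantics is compositional: `σ(alt i₁ i₂) = σ(i₁) + σ(i₂)`, `σ(strict i₁ i₂) = σ(i₁) σ(i₂)`,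
`σ(loop_S i) = σ(i)∗`, and `σ(cr_ℓ i₁ i₂)` is the shuffle of `σ(i₁)` and `σ(i₂)` in which a letter
`a` of the right trace may overtake only those letters of the left trace whose lifeline is not in
`{θ(a)} \ ℓ`. Regular languages are closed under these operations: in each case the result lies in
a finite family of languages whose derivatives (left quotients by a letter) are unions of members
of the family, and such a family is an NFA. For the shuffle, the family is indexed by pairs of
states together with the set of lifelines blocked so far. -/

inductive GuardedShuffle {α β : Type*} (θ : α → β) (f : α → Set β) :
    List α → List α → List α → Prop
  | nil : GuardedShuffle θ f [] [] []
  | left {a x y z} : GuardedShuffle θ f x y z → GuardedShuffle θ f (a :: x) y (a :: z)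
  | right {a x y z} : (∀ b ∈ x, θ b ∉ f a) → GuardedShuffle θ f x y z →
      GuardedShuffle θ f x (a :: y) (a :: z)

namespace GuardedShuffle

variable {α β : Type*} {θ : α → β} {f : α → Set β} {x y z : List α}

theorem length_eq (h : GuardedShuffle θ f x y z) : z.length = x.length + y.length := by
  induction h with
  | nil => rfl
  | left _ ih | right _ _ ih => simp only [List.length_cons, ih]; omega

theorem mem_iff (h : GuardedShuffle θ f x y z) {b : α} : b ∈ z ↔ b ∈ x ∨ b ∈ y := by
  induction h with
  | nil => simp
  | left _ ih | right _ _ ih => simp only [List.mem_cons, ih]; tauto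

theorem univ_iff : GuardedShuffle θ (fun _ => Set.univ) x y z ↔ z = x ++ y := by
  constructor
  · intro h
    induction h with
    | nil => rfl
    | left _ ih => simp [ih]
    | @right a x _ _ hblock _ ih =>
      obtain rfl : x = [] := List.eq_nil_iff_forall_not_mem.mpr fun b hb => hblock b hb trivial
      simp [ih]
  · rintro rfl
    induction x with
    | nil =>
      induction y with
      | nil => exact .nil
      | cons b y ih => exact .right (by simp) ih
    | cons b x ih => exact .left ih

end GuardedShuffle

theorem DFA.leftQuotient_acceptsFrom_singleton {α σ : Type*} (M : DFA α σ) (s : σ) (a : α) :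
    (M.acceptsFrom s).leftQuotient [a] = M.acceptsFrom (M.step s a) := rfl

namespace Language

open Computability

variable {α β : Type*} {l m : Language α}

theorem add_inf_distrib (l m k : Language α) : (l + m) ⊓ k = l ⊓ k + m ⊓ k :=
  inf_sup_right _ _ _

theorem cons_mem_mul {a : α} {x : List α} :
    a :: x ∈ l * m ↔ x ∈ l.leftQuotient [a] * m ∨ [] ∈ l ∧ a :: x ∈ m := by
  simp only [mem_mul, mem_leftQuotient, List.singleton_append]
  constructor
  · rintro ⟨_ | ⟨b, u⟩, hu, v, hv, h⟩
    · exact .inr ⟨hu, by simpa using h ▸ hv⟩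
    · obtain ⟨rfl, rfl⟩ := List.cons_eq_cons.mp h
      exact .inl ⟨u, hu, v, hv, rfl⟩
  · rintro (⟨u, hu, v, hv, rfl⟩ | ⟨hl, hm⟩)
    · exact ⟨a :: u, hu, v, hv, rfl⟩
    · exact ⟨[], hl, a :: x, hm, rfl⟩

theorem cons_mem_kstar {a : α} {x : List α} : a :: x ∈ l∗ ↔ x ∈ l.leftQuotient [a] * l∗ := by
  simp only [mem_mul, mem_leftQuotient, List.singleton_append]
  constructor
  · intro h
    obtain ⟨_ | ⟨_ | ⟨b, u⟩, S⟩, hx, hS⟩ := mem_kstar_iff_exists_nonempty.mp h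
    · simp at hx
    · exact absurd rfl (hS [] (by simp)).2
    · simp only [List.flatten_cons, List.cons_append, List.cons.injEq] at hx
      obtain ⟨rfl, rfl⟩ := hx
      exact ⟨u, (hS _ (by simp)).1, S.flatten,
        join_mem_kstar fun y hy => (hS y (by simp [hy])).1, rfl⟩
  · rintro ⟨u, hu, v, ⟨S, rfl, hS⟩, rfl⟩
    exact ⟨(a :: u) :: S, rfl, by simpa [hu] using hS⟩

def avoiding (θ : α → β) (T : Set β) : Language α := {x | ∀ b ∈ x, θ b ∉ T}

def guardedShuffle (θ : α → β) (f : α → Set β) (l m : Language α) : Language α :=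
  {z | ∃ x ∈ l, ∃ y ∈ m, GuardedShuffle θ f x y z}

variable {θ : α → β} {f : α → Set β} {T : Set β}

theorem mem_avoiding {x : List α} : x ∈ avoiding θ T ↔ ∀ b ∈ x, θ b ∉ T := Iff.rfl

theorem mem_guardedShuffle {z : List α} :
    z ∈ guardedShuffle θ f l m ↔ ∃ x ∈ l, ∃ y ∈ m, GuardedShuffle θ f x y z := Iff.rfl

@[simp]
theorem avoiding_empty : avoiding θ ∅ = ⊤ :=
  ext fun _ => iff_of_true (fun _ _ => id) trivial

theorem append_mem_avoiding {x y : List α} :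
    x ++ y ∈ avoiding θ T ↔ x ∈ avoiding θ T ∧ y ∈ avoiding θ T := by
  simp only [mem_avoiding, List.mem_append]
  grind

theorem mul_inf_avoiding :
    (l ⊓ avoiding θ T) * (m ⊓ avoiding θ T) = l * m ⊓ avoiding θ T := by
  ext z
  simp only [mem_mul, mem_inf]
  constructor
  · rintro ⟨x, ⟨hx, hxT⟩, y, ⟨hy, hyT⟩, rfl⟩
    exact ⟨⟨x, hx, y, hy, rfl⟩, append_mem_avoiding.mpr ⟨hxT, hyT⟩⟩
  · rintro ⟨⟨x, hx, y, hy, rfl⟩, hT⟩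
    obtain ⟨hxT, hyT⟩ := append_mem_avoiding.mp hT
    exact ⟨x, ⟨hx, hxT⟩, y, ⟨hy, hyT⟩, rfl⟩

theorem kstar_inf_avoiding : (l ⊓ avoiding θ T)∗ = l∗ ⊓ avoiding θ T := by
  ext z
  simp only [mem_kstar, mem_inf, mem_avoiding]
  constructor
  · rintro ⟨S, rfl, hS⟩
    exact ⟨⟨S, rfl, fun y hy => (hS y hy).1⟩, by grind [List.mem_flatten]⟩
  · rintro ⟨⟨S, rfl, hS⟩, hT⟩
    exact ⟨S, rfl, fun y hy => ⟨hS y hy, by grind [List.mem_flatten]⟩⟩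

theorem guardedShuffle_inf_avoiding :
    guardedShuffle θ f (l ⊓ avoiding θ T) (m ⊓ avoiding θ T) =
      guardedShuffle θ f l m ⊓ avoiding θ T := by
  ext z
  simp only [mem_guardedShuffle, mem_inf, mem_avoiding]
  constructor
  · rintro ⟨x, ⟨hx, hxT⟩, y, ⟨hy, hyT⟩, h⟩
    exact ⟨⟨x, hx, y, hy, h⟩, fun b hb => (h.mem_iff.mp hb).elim (hxT b) (hyT b)⟩
  · rintro ⟨⟨x, hx, y, hy, h⟩, hT⟩
    exact ⟨x, ⟨hx, fun b hb => hT b (h.mem_iff.mpr (.inl hb))⟩,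
      y, ⟨hy, fun b hb => hT b (h.mem_iff.mpr (.inr hb))⟩, h⟩

theorem cons_mem_guardedShuffle_inf_avoiding {a : α} {z : List α} :
    a :: z ∈ guardedShuffle θ f (l ⊓ avoiding θ T) m ↔
      θ a ∉ T ∧ z ∈ guardedShuffle θ f (l.leftQuotient [a] ⊓ avoiding θ T) m ∨
      z ∈ guardedShuffle θ f (l ⊓ avoiding θ (T ∪ f a)) (m.leftQuotient [a]) := by
  simp only [mem_guardedShuffle, mem_inf, mem_avoiding, mem_leftQuotient,
    List.singleton_append, Set.mem_union, not_or]
  constructor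
  · rintro ⟨x, ⟨hx, hxT⟩, y, hy, h⟩
    cases h with
    | left h => exact .inl ⟨hxT a (by simp), _, ⟨hx, fun b hb => hxT b (by simp [hb])⟩, y, hy, h⟩
    | right hblock h => exact .inr ⟨x, ⟨hx, fun b hb => ⟨hxT b hb, hblock b hb⟩⟩, _, hy, h⟩
  · rintro (⟨haT, x, ⟨hx, hxT⟩, y, hy, h⟩ | ⟨x, ⟨hx, hxT⟩, y, hy, h⟩)
    · exact ⟨a :: x, ⟨hx, by simpa [haT] using hxT⟩, y, hy, .left h⟩
    · exact ⟨x, ⟨hx, fun b hb => (hxT b hb).1⟩, a :: y, hy, .right (fun b hb => (hxT b hb).2) h⟩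

theorem cons_mem_guardedShuffle {a : α} {z : List α} :
    a :: z ∈ guardedShuffle θ f l m ↔
      z ∈ guardedShuffle θ f (l.leftQuotient [a]) m ∨
      z ∈ guardedShuffle θ f (l ⊓ avoiding θ (f a)) (m.leftQuotient [a]) := by
  simpa using cons_mem_guardedShuffle_inf_avoiding (θ := θ) (f := f) (l := l) (m := m) (T := ∅)

theorem guardedShuffle_univ : guardedShuffle θ (fun _ => Set.univ) l m = l * m := by
  ext z
  simp only [mem_guardedShuffle, GuardedShuffle.univ_iff, mem_mul, eq_comm]

def AgreeUpTo (n : ℕ) (l m : Language α) : Prop :=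
  ∀ x : List α, x.length ≤ n → (x ∈ l ↔ x ∈ m)

theorem eq_of_forall_agreeUpTo (h : ∀ n, AgreeUpTo n l m) : l = m :=
  ext fun x => h x.length x le_rfl

namespace AgreeUpTo

variable {n : ℕ} {l' m' : Language α}

theorem of_eq (h : l = m) : AgreeUpTo n l m := fun _ _ => h ▸ Iff.rfl

theorem symm (h : AgreeUpTo n l m) : AgreeUpTo n m l := fun x hx => (h x hx).symm

theorem trans {k : Language α} (h₁ : AgreeUpTo n l m) (h₂ : AgreeUpTo n m k) :
    AgreeUpTo n l k := fun x hx => (h₁ x hx).trans (h₂ x hx)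

theorem inf (hl : AgreeUpTo n l l') (hm : AgreeUpTo n m m') : AgreeUpTo n (l ⊓ m) (l' ⊓ m') :=
  fun x hx => and_congr (hl x hx) (hm x hx)

theorem add (hl : AgreeUpTo n l l') (hm : AgreeUpTo n m m') : AgreeUpTo n (l + m) (l' + m') :=
  fun x hx => or_congr (hl x hx) (hm x hx)

theorem mul (hl : AgreeUpTo n l l') (hm : AgreeUpTo n m m') : AgreeUpTo n (l * m) (l' * m') := by
  rintro _ hz
  simp only [mem_mul]
  constructor
  all_goals
    rintro ⟨x, hx, y, hy, rfl⟩
    rw [List.length_append] at hz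
  · exact ⟨x, (hl x (by omega)).mp hx, y, (hm y (by omega)).mp hy, rfl⟩
  · exact ⟨x, (hl x (by omega)).mpr hx, y, (hm y (by omega)).mpr hy, rfl⟩

theorem kstar (hl : AgreeUpTo n l l') : AgreeUpTo n l∗ l'∗ := by
  have hle {S : List (List α)} {y} (hy : y ∈ S) : y.length ≤ S.flatten.length :=
    (List.sublist_flatten_of_mem hy).length_le
  rintro _ hz
  simp only [mem_kstar]
  constructor
  · rintro ⟨S, rfl, hS⟩
    exact ⟨S, rfl, fun y hy => (hl y ((hle hy).trans hz)).mp (hS y hy)⟩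
  · rintro ⟨S, rfl, hS⟩
    exact ⟨S, rfl, fun y hy => (hl y ((hle hy).trans hz)).mpr (hS y hy)⟩

theorem guardedShuffle (hl : AgreeUpTo n l l') (hm : AgreeUpTo n m m') :
    AgreeUpTo n (guardedShuffle θ f l m) (guardedShuffle θ f l' m') := by
  intro z hz
  simp only [mem_guardedShuffle]
  constructor
  all_goals
    rintro ⟨x, hx, y, hy, h⟩
    have := h.length_eq
  · exact ⟨x, (hl x (by omega)).mp hx, y, (hm y (by omega)).mp hy, h⟩
  · exact ⟨x, (hl x (by omega)).mpr hx, y, (hm y (by omega)).mpr hy, h⟩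

end AgreeUpTo

/-- The `P q` are the state languages of the NFA with transitions `δ` whose accepting states are
the `q` with `[] ∈ P q`. -/
theorem isRegular_of_cons_mem_iff {σ : Type*} [Finite σ] (P : σ → Language α)
    (δ : σ → α → Set σ) (hδ : ∀ q a x, a :: x ∈ P q ↔ ∃ q' ∈ δ q a, x ∈ P q') (q : σ) :
    (P q).IsRegular := by
  let N : NFA α σ := ⟨δ, {q}, {q | [] ∈ P q}⟩
  have hN : ∀ x S, x ∈ N.acceptsFrom S ↔ ∃ q ∈ S, x ∈ P q := by
    intro x
    induction x with
    | nil => simp [N]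
    | cons a x ih =>
      intro S
      simp only [NFA.cons_mem_acceptsFrom, ih, NFA.mem_stepSet, hδ]
      grind
  have : Fintype (Set σ) := Fintype.ofFinite _
  refine isRegular_iff.mpr ⟨Set σ, inferInstance, N.toDFA, ?_⟩
  ext x
  rw [N.toDFA_correct, NFA.accepts_eq_acceptsFrom_start, hN]
  simp [N]

theorem isRegular_singleton (w : List α) : ({w} : Language α).IsRegular := by
  have : Finite {v // v ∈ w.tails} := (List.finite_toSet w.tails).to_subtype
  refine isRegular_of_cons_mem_iff (fun v : {v // v ∈ w.tails} => ({v.1} : Language α))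
    (fun v a => {v' | v.1 = a :: v'.1}) ?_ ⟨w, by simp⟩
  rintro ⟨v, hv⟩ a x
  change a :: x = v ↔ ∃ v' : {v // v ∈ w.tails}, v = a :: v'.1 ∧ x = v'.1
  constructor
  · rintro rfl
    have hx : x <:+ w := (List.suffix_cons a x).trans ((List.mem_tails _ _).mp hv)
    exact ⟨⟨x, (List.mem_tails _ _).mpr hx⟩, rfl, rfl⟩
  · rintro ⟨_, rfl, rfl⟩
    rfl

theorem IsRegular.kstar (hl : l.IsRegular) : l∗.IsRegular := by
  obtain ⟨σ, _, M, rfl⟩ := hl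
  let P : Option σ → Language α
    | none => M.accepts∗
    | some p => M.acceptsFrom p * M.accepts∗
  let δ : Option σ → α → Set (Option σ)
    | none, a => {some (M.step M.start a)}
    | some p, a => {q | q = some (M.step p a) ∨ p ∈ M.accept ∧ q = some (M.step M.start a)}
  refine isRegular_of_cons_mem_iff P δ ?_ none
  rintro (_ | p) a x
  · simp [P, δ, cons_mem_kstar, DFA.accepts, DFA.leftQuotient_acceptsFrom_singleton]
  · simp [P, δ, cons_mem_mul, cons_mem_kstar, DFA.accepts,
      DFA.leftQuotient_acceptsFrom_singleton, DFA.mem_acceptsFrom]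

/-- In the state `(T, p, q)`, `T` collects the blocks `f a` of the letters already taken from the
right, which the remaining left letters must avoid. -/
theorem IsRegular.guardedShuffle [Finite β] (hl : l.IsRegular) (hm : m.IsRegular) :
    (guardedShuffle θ f l m).IsRegular := by
  obtain ⟨σ₁, _, M₁, rfl⟩ := hl
  obtain ⟨σ₂, _, M₂, rfl⟩ := hm
  let P : Set β × σ₁ × σ₂ → Language α := fun r =>
    Language.guardedShuffle θ f (M₁.acceptsFrom r.2.1 ⊓ avoiding θ r.1) (M₂.acceptsFrom r.2.2)
  let δ : Set β × σ₁ × σ₂ → α → Set (Set β × σ₁ × σ₂) := fun r a =>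
    {r' | θ a ∉ r.1 ∧ r' = (r.1, M₁.step r.2.1 a, r.2.2) ∨
      r' = (r.1 ∪ f a, r.2.1, M₂.step r.2.2 a)}
  have hP := isRegular_of_cons_mem_iff P δ ?_ (∅, M₁.start, M₂.start)
  · simpa [P, DFA.accepts] using hP
  rintro ⟨T, p, q⟩ a z
  simp [P, δ, cons_mem_guardedShuffle_inf_avoiding, DFA.leftQuotient_acceptsFrom_singleton]

/-- Concatenation is the shuffle in which every letter of the right blocks all of the left. -/
theorem IsRegular.mul (hl : l.IsRegular) (hm : m.IsRegular) : (l * m).IsRegular := by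
  rw [← guardedShuffle_univ (θ := fun _ => ())]
  exact hl.guardedShuffle hm

end Language

namespace Interaction

open Language Computability

variable {L M : Type}

theorem Evades.mono {i : Interaction L M} {s s' : Set L} (h : Evades i s) (hs : s' ⊆ s) :
    Evades i s' := by
  induction h with
  | empty => exact .empty _
  | act a _ ha => exact .act a _ fun h => ha (hs h)
  | altL _ ih => exact .altL (ih hs)
  | altR _ ih => exact .altR (ih hs)
  | strict _ _ ih₁ ih₂ => exact .strict (ih₁ hs) (ih₂ hs)
  | cr _ _ ih₁ ih₂ => exact .cr (ih₁ hs) (ih₂ hs)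
  | loopS => exact .loopS _ _

theorem Evades.of_prune {i i' : Interaction L M} {s s' : Set L} (hp : Prune i s i')
    (h : Evades i' s') : Evades i s' := by
  induction hp with
  | empty | act => exact h
  | loopS | loopSElim => exact .loopS _ _
  | altL _ _ ih => exact .altL (ih h)
  | altR _ _ ih => exact .altR (ih h)
  | altBoth _ _ ih₁ ih₂ =>
    cases h with
    | altL h => exact .altL (ih₁ h)
    | altR h => exact .altR (ih₂ h)
  | strict _ _ ih₁ ih₂ => cases h with | strict h₁ h₂ => exact .strict (ih₁ h₁) (ih₂ h₂)
  | cr _ _ ih₁ ih₂ => cases h with | cr h₁ h₂ => exact .cr (ih₁ h₁) (ih₂ h₂)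

theorem exists_prune_of_evades {i : Interaction L M} {s : Set L} (h : Evades i s) :
    ∃ i', Prune i s i' := by
  induction i generalizing s with
  | empty => exact ⟨_, .empty s⟩
  | act a => cases h with | act _ _ ha => exact ⟨_, .act a s ha⟩
  | loopS i ih =>
    by_cases hi : Evades i s
    · obtain ⟨i', hp⟩ := ih hi
      exact ⟨_, .loopS hp⟩
    · exact ⟨_, .loopSElim hi⟩
  | strict i₁ i₂ ih₁ ih₂ =>
    cases h with | strict h₁ h₂ =>
    obtain ⟨_, hp₁⟩ := ih₁ h₁
    obtain ⟨_, hp₂⟩ := ih₂ h₂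
    exact ⟨_, .strict hp₁ hp₂⟩
  | cr ℓ i₁ i₂ ih₁ ih₂ =>
    cases h with | cr h₁ h₂ =>
    obtain ⟨_, hp₁⟩ := ih₁ h₁
    obtain ⟨_, hp₂⟩ := ih₂ h₂
    exact ⟨_, .cr hp₁ hp₂⟩
  | alt i₁ i₂ ih₁ ih₂ =>
    by_cases h₁ : Evades i₁ s <;> by_cases h₂ : Evades i₂ s
    · obtain ⟨_, hp₁⟩ := ih₁ h₁
      obtain ⟨_, hp₂⟩ := ih₂ h₂
      exact ⟨_, .altBoth hp₁ hp₂⟩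
    · obtain ⟨_, hp₁⟩ := ih₁ h₁
      exact ⟨_, .altL hp₁ h₂⟩
    · obtain ⟨_, hp₂⟩ := ih₂ h₂
      exact ⟨_, .altR hp₂ h₁⟩
    · cases h <;> contradiction

theorem Evades.of_exec {i i' : Interaction L M} {a : MyAction L M} {s : Set L}
    (he : Exec i a i') (ha : a.lifeline ∉ s) (h : Evades i' s) : Evades i s := by
  induction he with
  | act a => exact .act a _ ha
  | loop => exact .loopS _ _
  | strictL _ ih => cases h with | strict h₁ h₂ => exact .strict (ih ha h₁) h₂
  | strictR _ h₁ ih => exact .strict (h₁.mono (Set.subset_univ _)) (ih ha h)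
  | crL _ ih => cases h with | cr h₁ h₂ => exact .cr (ih ha h₁) h₂
  | crR _ hp ih => cases h with | cr h₁ h₂ => exact .cr (h₁.of_prune hp) (ih ha h₂)
  | altChoiceL _ _ ih => exact .altL (ih ha h)
  | altChoiceR _ _ ih => exact .altR (ih ha h)
  | altDelay _ _ ih₁ ih₂ =>
    cases h with
    | altL h => exact .altL (ih₁ ha h)
    | altR h => exact .altR (ih₂ ha h)

theorem exec_or_noExpr (i : Interaction L M) (a : MyAction L M) :
    (∃ i', Exec i a i') ∨ NoExpr i a := by
  induction i with
  | empty => exact .inr (.empty a)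
  | act b =>
    by_cases hb : b = a
    · subst hb
      exact .inl ⟨_, .act b⟩
    · exact .inr (.act hb)
  | loopS i ih => exact ih.imp (fun ⟨_, he⟩ => ⟨_, .loop he⟩) .loopS
  | strict i₁ i₂ ih₁ ih₂ =>
    rcases ih₁ with ⟨_, he⟩ | hn₁
    · exact .inl ⟨_, .strictL he⟩
    rcases ih₂ with ⟨_, he⟩ | hn₂
    · by_cases hv : Evades i₁ Set.univ
      · exact .inl ⟨_, .strictR he hv⟩
      · exact .inr (.strictNoEvade hn₁ hv)
    · exact .inr (.strictBoth hn₁ hn₂)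
  | cr ℓ i₁ i₂ ih₁ ih₂ =>
    rcases ih₁ with ⟨_, he⟩ | hn₁
    · exact .inl ⟨_, .crL he⟩
    rcases ih₂ with ⟨_, he⟩ | hn₂
    · by_cases hv : Evades i₁ ({a.lifeline} \ ℓ)
      · obtain ⟨_, hp⟩ := exists_prune_of_evades hv
        exact .inl ⟨_, .crR he hp⟩
      · exact .inr (.crNoEvade hn₁ hv)
    · exact .inr (.crBoth hn₁ hn₂)
  | alt i₁ i₂ ih₁ ih₂ =>
    rcases ih₁ with ⟨_, he₁⟩ | hn₁ <;> rcases ih₂ with ⟨_, he₂⟩ | hn₂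
    · exact .inl ⟨_, .altDelay he₁ he₂⟩
    · exact .inl ⟨_, .altChoiceL he₁ hn₂⟩
    · exact .inl ⟨_, .altChoiceR he₂ hn₁⟩
    · exact .inr (.alt hn₁ hn₂)

def traces (i : Interaction L M) : Language (MyAction L M) := {t | Sem i t}

theorem nil_mem_traces {i : Interaction L M} : [] ∈ traces i ↔ Evades i Set.univ :=
  ⟨fun h => by cases h with | nil h => exact h, .nil⟩

theorem cons_mem_traces {i : Interaction L M} {a : MyAction L M} {t : List (MyAction L M)} :
    a :: t ∈ traces i ↔ ∃ i', Exec i a i' ∧ t ∈ traces i' :=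
  ⟨fun h => by cases h with | cons he ht => exact ⟨_, he, ht⟩,
    fun ⟨_, he, ht⟩ => .cons he ht⟩

theorem evades_of_mem_traces {i : Interaction L M} {t : List (MyAction L M)} {s : Set L}
    (ht : t ∈ traces i) (hs : t ∈ avoiding MyAction.lifeline s) : Evades i s := by
  induction ht with
  | nil h => exact h.mono (Set.subset_univ _)
  | cons he _ ih =>
    rw [mem_avoiding, List.forall_mem_cons] at hs
    exact .of_exec he hs.1 (ih hs.2)

theorem traces_inf_avoiding_eq_zero {i : Interaction L M} {s : Set L} (h : ¬ Evades i s) :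
    traces i ⊓ avoiding MyAction.lifeline s = 0 :=
  ext fun _ => iff_of_false (fun ht => h (evades_of_mem_traces ht.1 ht.2)) (notMem_zero _)

theorem traces_empty : traces (.empty : Interaction L M) = 1 := by
  ext (_ | ⟨a, t⟩)
  · exact iff_of_true (nil_mem_traces.mpr (.empty _)) rfl
  · exact iff_of_false (fun h => by obtain ⟨_, he, _⟩ := cons_mem_traces.mp h; cases he)
      (List.cons_ne_nil _ _)

theorem traces_act (a : MyAction L M) : traces (.act a) = {[a]} := by
  ext (_ | ⟨b, t⟩)
  · refine iff_of_false (fun h => ?_) (List.cons_ne_nil a [] ·.symm)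
    cases nil_mem_traces.mp h with | act _ _ h => exact h (Set.mem_univ _)
  · rw [cons_mem_traces]
    change _ ↔ b :: t = [a]
    constructor
    · rintro ⟨_, he, ht⟩
      cases he
      rw [traces_empty, mem_one] at ht
      rw [ht]
    · intro h
      obtain ⟨rfl, rfl⟩ := List.cons_eq_cons.mp h
      exact ⟨_, .act b, by rw [traces_empty]; exact nil_mem_one⟩

theorem traces_alt (i₁ i₂ : Interaction L M) : traces (.alt i₁ i₂) = traces i₁ + traces i₂ := by
  ext t
  rw [mem_add]
  induction t generalizing i₁ i₂ with
  | nil =>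
    simp only [nil_mem_traces]
    constructor
    · intro h
      cases h with
      | altL h => exact .inl h
      | altR h => exact .inr h
    · rintro (h | h)
      exacts [.altL h, .altR h]
  | cons a t ih =>
    simp only [cons_mem_traces]
    constructor
    · rintro ⟨_, he, ht⟩
      cases he with
      | altChoiceL he₁ => exact .inl ⟨_, he₁, ht⟩
      | altChoiceR he₂ => exact .inr ⟨_, he₂, ht⟩
      | altDelay he₁ he₂ => exact (ih _ _ |>.mp ht).imp (⟨_, he₁, ·⟩) (⟨_, he₂, ·⟩)
    · rintro (⟨_, he₁, ht⟩ | ⟨_, he₂, ht⟩)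
      · rcases exec_or_noExpr i₂ a with ⟨_, he₂⟩ | hn₂
        exacts [⟨_, .altDelay he₁ he₂, (ih _ _).mpr (.inl ht)⟩, ⟨_, .altChoiceL he₁ hn₂, ht⟩]
      · rcases exec_or_noExpr i₁ a with ⟨_, he₁⟩ | hn₁
        exacts [⟨_, .altDelay he₁ he₂, (ih _ _).mpr (.inr ht)⟩, ⟨_, .altChoiceR he₂ hn₁, ht⟩]

theorem mem_leftQuotient_traces_mul {i : Interaction L M} {a : MyAction L M}
    {m : Language (MyAction L M)} {t : List (MyAction L M)} :
    t ∈ (traces i).leftQuotient [a] * m ↔ ∃ i', Exec i a i' ∧ t ∈ traces i' * m := by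
  simp only [mem_mul, mem_leftQuotient, List.singleton_append, cons_mem_traces]
  grind

theorem traces_strict (i₁ i₂ : Interaction L M) :
    traces (.strict i₁ i₂) = traces i₁ * traces i₂ := by
  ext t
  induction t generalizing i₁ with
  | nil =>
    simp only [nil_mem_traces, mem_mul, List.append_eq_nil_iff]
    constructor
    · intro h
      cases h with | strict h₁ h₂ =>
      exact ⟨[], nil_mem_traces.mpr h₁, [], nil_mem_traces.mpr h₂, rfl, rfl⟩
    · rintro ⟨_, h₁, _, h₂, rfl, rfl⟩
      exact .strict (nil_mem_traces.mp h₁) (nil_mem_traces.mp h₂)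
  | cons a t ih =>
    rw [cons_mem_mul, mem_leftQuotient_traces_mul, cons_mem_traces, nil_mem_traces]
    constructor
    · rintro ⟨_, he, ht⟩
      cases he with
      | strictL he₁ => exact .inl ⟨_, he₁, (ih _).mp ht⟩
      | strictR he₂ hv => exact .inr ⟨hv, cons_mem_traces.mpr ⟨_, he₂, ht⟩⟩
    · rintro (⟨_, he₁, ht⟩ | ⟨hv, ht⟩)
      · exact ⟨_, .strictL he₁, (ih _).mpr ht⟩
      · obtain ⟨_, he₂, ht⟩ := cons_mem_traces.mp ht
        exact ⟨_, .strictR he₂ hv, ht⟩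

theorem traces_loopS (i : Interaction L M) : traces (.loopS i) = (traces i)∗ := by
  refine eq_of_forall_agreeUpTo fun n => ?_
  induction n with
  | zero =>
    rintro (_ | _) h
    · exact iff_of_true (nil_mem_traces.mpr (.loopS _ _)) (nil_mem_kstar _)
    · simp at h
  | succ n ih =>
    rintro (_ | ⟨a, t⟩) ht
    · exact iff_of_true (nil_mem_traces.mpr (.loopS _ _)) (nil_mem_kstar _)
    calc a :: t ∈ traces (.loopS i)
        ↔ ∃ i', Exec i a i' ∧ t ∈ traces i' * traces (.loopS i) := by
          rw [cons_mem_traces]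
          constructor
          · rintro ⟨_, he, ht⟩
            cases he with | loop he => exact ⟨_, he, traces_strict _ _ ▸ ht⟩
          · rintro ⟨_, he, ht⟩
            exact ⟨_, .loop he, traces_strict _ _ ▸ ht⟩
      _ ↔ ∃ i', Exec i a i' ∧ t ∈ traces i' * (traces i)∗ :=
          exists_congr fun _ => and_congr_right fun _ =>
            (AgreeUpTo.of_eq rfl).mul ih t (Nat.le_of_succ_le_succ ht)
      _ ↔ a :: t ∈ (traces i)∗ := by rw [cons_mem_kstar, mem_leftQuotient_traces_mul]

abbrev crShuffle (ℓ : Set L) : Language (MyAction L M) → Language (MyAction L M) →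
    Language (MyAction L M) :=
  guardedShuffle MyAction.lifeline fun a => {a.lifeline} \ ℓ

theorem mem_guardedShuffle_leftQuotient_traces_left {β : Type*} {θ : MyAction L M → β}
    {f : MyAction L M → Set β} {i : Interaction L M} {a : MyAction L M}
    {m : Language (MyAction L M)} {t : List (MyAction L M)} :
    t ∈ guardedShuffle θ f ((traces i).leftQuotient [a]) m ↔
      ∃ i', Exec i a i' ∧ t ∈ guardedShuffle θ f (traces i') m := by
  simp only [mem_guardedShuffle, mem_leftQuotient, List.singleton_append, cons_mem_traces]
  grind

theorem mem_guardedShuffle_leftQuotient_traces_right {β : Type*} {θ : MyAction L M → β}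
    {f : MyAction L M → Set β} {i : Interaction L M} {a : MyAction L M}
    {l : Language (MyAction L M)} {t : List (MyAction L M)} :
    t ∈ guardedShuffle θ f l ((traces i).leftQuotient [a]) ↔
      ∃ i', Exec i a i' ∧ t ∈ guardedShuffle θ f l (traces i') := by
  simp only [mem_guardedShuffle, mem_leftQuotient, List.singleton_append, cons_mem_traces]
  grind

theorem nil_mem_traces_cr {ℓ : Set L} {i₁ i₂ : Interaction L M} :
    [] ∈ traces (.cr ℓ i₁ i₂) ↔ [] ∈ crShuffle ℓ (traces i₁) (traces i₂) := by
  rw [nil_mem_traces, mem_guardedShuffle]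
  constructor
  · intro h
    cases h with | cr h₁ h₂ =>
    exact ⟨[], nil_mem_traces.mpr h₁, [], nil_mem_traces.mpr h₂, .nil⟩
  · rintro ⟨_, h₁, _, h₂, h⟩
    cases h
    exact .cr (nil_mem_traces.mp h₁) (nil_mem_traces.mp h₂)

/-- `cr` prunes its left argument and pruning a `cr` prunes both arguments, so this lemma and
`agreeUpTo_traces_cr_succ` are proved together by induction on the length of traces. -/
theorem agreeUpTo_traces_of_prune {n : ℕ}
    (hcr : ∀ ℓ (i₁ i₂ : Interaction L M),
      AgreeUpTo n (traces (.cr ℓ i₁ i₂)) (crShuffle ℓ (traces i₁) (traces i₂)))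
    {i i' : Interaction L M} {s : Set L} (hp : Prune i s i') :
    AgreeUpTo n (traces i') (traces i ⊓ avoiding MyAction.lifeline s) := by
  induction hp with
  | empty =>
    rw [traces_empty, inf_eq_left.mpr]
    · exact .of_eq rfl
    · rintro _ rfl
      exact fun _ h => by simp at h
  | act a s ha =>
    rw [traces_act, inf_eq_left.mpr]
    · exact .of_eq rfl
    · rintro _ rfl
      exact mem_avoiding.mpr (by simpa using ha)
  | altL _ hne ih =>
    rw [traces_alt, add_inf_distrib, traces_inf_avoiding_eq_zero hne, add_zero]
    exact ih
  | altR _ hne ih =>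
    rw [traces_alt, add_inf_distrib, traces_inf_avoiding_eq_zero hne, zero_add]
    exact ih
  | altBoth _ _ ih₁ ih₂ =>
    rw [traces_alt, traces_alt, add_inf_distrib]
    exact ih₁.add ih₂
  | strict _ _ ih₁ ih₂ =>
    rw [traces_strict, traces_strict, ← mul_inf_avoiding]
    exact ih₁.mul ih₂
  | cr _ _ ih₁ ih₂ =>
    refine (hcr _ _ _).trans <| (ih₁.guardedShuffle ih₂).trans ?_
    rw [guardedShuffle_inf_avoiding]
    exact ((hcr _ _ _).inf (.of_eq rfl)).symm
  | loopS _ ih =>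
    rw [traces_loopS, traces_loopS, ← kstar_inf_avoiding]
    exact ih.kstar
  | loopSElim hne =>
    rw [traces_loopS, ← kstar_inf_avoiding, traces_inf_avoiding_eq_zero hne, kstar_zero,
      traces_empty]
    exact .of_eq rfl

theorem agreeUpTo_traces_cr_succ {n : ℕ}
    (hcr : ∀ ℓ (i₁ i₂ : Interaction L M),
      AgreeUpTo n (traces (.cr ℓ i₁ i₂)) (crShuffle ℓ (traces i₁) (traces i₂)))
    (ℓ : Set L) (i₁ i₂ : Interaction L M) :
    AgreeUpTo (n + 1) (traces (.cr ℓ i₁ i₂)) (crShuffle ℓ (traces i₁) (traces i₂)) := by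
  rintro (_ | ⟨a, t⟩) ht
  · exact nil_mem_traces_cr
  replace ht : t.length ≤ n := Nat.le_of_succ_le_succ ht
  have hprune {i₁' i₂'} (hp : Prune i₁ ({a.lifeline} \ ℓ) i₁') :
      t ∈ traces (.cr ℓ i₁' i₂') ↔
        t ∈ crShuffle ℓ (traces i₁ ⊓ avoiding MyAction.lifeline ({a.lifeline} \ ℓ)) (traces i₂') :=
    ((hcr _ _ _).trans ((agreeUpTo_traces_of_prune hcr hp).guardedShuffle (.of_eq rfl))) t ht
  calc a :: t ∈ traces (.cr ℓ i₁ i₂)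
      ↔ (∃ i₁', Exec i₁ a i₁' ∧ t ∈ traces (.cr ℓ i₁' i₂)) ∨
        ∃ i₂', Exec i₂ a i₂' ∧ ∃ i₁', Prune i₁ ({a.lifeline} \ ℓ) i₁' ∧
          t ∈ traces (.cr ℓ i₁' i₂') := by
        rw [cons_mem_traces]
        constructor
        · rintro ⟨_, he, ht⟩
          cases he with
          | crL he₁ => exact .inl ⟨_, he₁, ht⟩
          | crR he₂ hp => exact .inr ⟨_, he₂, _, hp, ht⟩
        · rintro (⟨_, he₁, ht⟩ | ⟨_, he₂, _, hp, ht⟩)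
          exacts [⟨_, .crL he₁, ht⟩, ⟨_, .crR he₂ hp, ht⟩]
    _ ↔ (∃ i₁', Exec i₁ a i₁' ∧ t ∈ crShuffle ℓ (traces i₁') (traces i₂)) ∨
        ∃ i₂', Exec i₂ a i₂' ∧
          t ∈ crShuffle ℓ (traces i₁ ⊓ avoiding MyAction.lifeline ({a.lifeline} \ ℓ))
            (traces i₂') := by
        refine or_congr (exists_congr fun _ => and_congr_right fun _ => hcr _ _ _ t ht)
          (exists_congr fun _ => and_congr_right fun _ => ⟨fun ⟨_, hp, h⟩ => (hprune hp).mp h,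
            fun h => ?_⟩)
        have hv : Evades i₁ ({a.lifeline} \ ℓ) := by
          obtain ⟨_, ⟨ht₁, hW⟩, -⟩ := h
          exact evades_of_mem_traces ht₁ hW
        obtain ⟨_, hp⟩ := exists_prune_of_evades hv
        exact ⟨_, hp, (hprune hp).mpr h⟩
    _ ↔ a :: t ∈ crShuffle ℓ (traces i₁) (traces i₂) := by
        rw [cons_mem_guardedShuffle, mem_guardedShuffle_leftQuotient_traces_left,
          mem_guardedShuffle_leftQuotient_traces_right]

theorem traces_cr (ℓ : Set L) (i₁ i₂ : Interaction L M) :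
    traces (.cr ℓ i₁ i₂) = crShuffle ℓ (traces i₁) (traces i₂) := by
  suffices ∀ n ℓ (i₁ i₂ : Interaction L M),
      AgreeUpTo n (traces (.cr ℓ i₁ i₂)) (crShuffle ℓ (traces i₁) (traces i₂)) from
    eq_of_forall_agreeUpTo fun n => this n ℓ i₁ i₂
  intro n
  induction n with
  | zero =>
    rintro ℓ i₁ i₂ (_ | _) h
    exacts [nil_mem_traces_cr, absurd h (by simp)]
  | succ n ih => exact agreeUpTo_traces_cr_succ ih

theorem isRegular_traces [Finite L] (i : Interaction L M) : (traces i).IsRegular := by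
  induction i with
  | empty => exact traces_empty (L := L) (M := M) ▸ isRegular_singleton []
  | act a => exact traces_act a ▸ isRegular_singleton [a]
  | loopS i ih => exact traces_loopS i ▸ ih.kstar
  | strict i₁ i₂ ih₁ ih₂ => exact traces_strict i₁ i₂ ▸ ih₁.mul ih₂
  | alt i₁ i₂ ih₁ ih₂ => exact traces_alt i₁ i₂ ▸ ih₁.add ih₂
  | cr ℓ i₁ i₂ ih₁ ih₂ => exact traces_cr ℓ i₁ i₂ ▸ ih₁.guardedShuffle ih₂

end Interaction

theorem sem_regular_general {L M : Type} [Finite L] (i : Interaction L M) :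
    ∃ (Q : Type) (_ : Finite Q) (N : NFA (MyAction L M) Q),
      N.accepts = {t | Sem i t} := by
  obtain ⟨Q, _, D, hD⟩ := isRegular_traces i
  exact ⟨Q, inferInstance, D.toNFA, by rw [DFA.toNFA_correct, hD]; rfl⟩

/-- the trace language of every interaction is regular: there is a
nondeterministic finite automaton over the alphabet of actions, with a finite set
of states, whose recognized language is exactly `σ(i)`. -/
theorem sem_regular {L M : Type} [Finite L] [Finite M] (i : Interaction L M) :
    ∃ (Q : Type) (_ : Finite Q) (N : NFA (MyAction L M) Q),
      N.accepts = {t | Sem i t} :=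
  sem_regular_general i
end
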